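/- Let R, K > 0, let γ : [0,T] → ℝ² be a continuously differentiable loop (γ(0) = γ(T)) whose range is contained in the closed ball of radius R centred at 0, and let φ : ℝ² → [0,∞) be smooth with ∫_{ℝ²} φ = 1 and support contained in the closed ball of radius K centred at 0. Then for every z ∈ ℝ² with |z| > R + K, ∫₀^T ⟨(φ * θ)(γ(t) − z), γ̇(t)⟩ dt = 0. In particular (taking φ a mollifier concentrating at 0, or directly), for every continuously differentiable loop γ with range in the closed ball of radius R and every z with |z| > R, ∫₀^T ⟨θ(γ(t) − z), γ̇(t)⟩ dt = 0. -/

import Mathlib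

open MeasureTheory Real Set

/-- The vector field `θ(z) = (−z₂, z₁)/(2π|z|²)` on `ℝ² ≃ ℂ`. -/
noncomputable def theta (z : ℂ) : ℂ :=
  ((2 * Real.pi * ‖z‖ ^ 2)⁻¹ : ℝ) • (Complex.I * z)

/-- The Euclidean inner product on `ℝ² ≃ ℂ`. -/
noncomputable def dot2 (a b : ℂ) : ℝ := a.re * b.re + a.im * b.im

lemma dot2_theta (u v : ℂ) (hu : u ≠ 0) : dot2 (theta u) v = (v * u⁻¹).im / (2 * π) := by
  have hn : Complex.normSq u ≠ 0 := (Complex.normSq_pos.2 hu).ne'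
  have hpi : (π : ℝ) ≠ 0 := Real.pi_ne_zero
  simp only [theta, dot2, Complex.real_smul, Complex.mul_im, Complex.mul_re,
    Complex.inv_re, Complex.inv_im, Complex.ofReal_re, Complex.ofReal_im,
    Complex.I_re, Complex.I_im, Complex.sq_norm]
  field_simp
  ring

lemma part2 (R T : ℝ) (hT : 0 < T) (γ : ℝ → ℂ)
    (hγ : ContDiffOn ℝ 1 γ (Set.Icc 0 T)) (hloop : γ 0 = γ T)
    (hrange : ∀ t ∈ Set.Icc (0:ℝ) T, ‖γ t‖ ≤ R) (z : ℂ) (hz : R < ‖z‖) :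
    (∫ t in (0:ℝ)..T,
        dot2 (theta (γ t - z)) (derivWithin γ (Set.Icc 0 T) t)) = 0 := by
  have hz0 : z ≠ 0 := by
    intro h; rw [h] at hz; simp at hz
    exact absurd ((hrange 0 (by constructor <;> [rfl; exact hT.le])).trans hz.le) (by
      have := norm_nonneg (γ 0); linarith [hrange 0 ⟨le_refl 0, hT.le⟩])
  have hzpos : (0:ℝ) ≤ R := le_trans (norm_nonneg _) (hrange 0 ⟨le_refl 0, hT.le⟩)
  -- key facts
  have hne : ∀ t ∈ Icc (0:ℝ) T, γ t - z ≠ 0 := by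
    intro t ht h
    have : ‖γ t‖ = ‖z‖ := by rw [sub_eq_zero] at h; rw [h]
    linarith [hrange t ht]
  have hslit : ∀ t ∈ Icc (0:ℝ) T, 1 - γ t / z ∈ Complex.slitPlane := by
    intro t ht
    left
    have h1 : (γ t / z).re ≤ ‖γ t / z‖ := Complex.re_le_norm _
    have h2 : ‖γ t / z‖ < 1 := by
      rw [norm_div, div_lt_one (lt_of_le_of_lt hzpos hz)]
      exact lt_of_le_of_lt (hrange t ht) hz
    simp only [Complex.sub_re, Complex.one_re, Complex.div_re]
    have : (γ t / z).re < 1 := lt_of_le_of_lt h1 h2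
    simp only [Complex.div_re] at this ⊢
    linarith
  set γ' := fun t => derivWithin γ (Set.Icc 0 T) t with hγ'
  have hγcont : ContinuousOn γ (Icc 0 T) := hγ.continuousOn
  have hγ'cont : ContinuousOn γ' (Icc 0 T) :=
    hγ.continuousOn_derivWithin (uniqueDiffOn_Icc hT) le_rfl
  set g : ℝ → ℝ := fun t => (Complex.log (1 - γ t / z)).im / (2 * π) with hg
  set f' : ℝ → ℝ := fun t => ((γ' t) * (γ t - z)⁻¹).im / (2 * π) with hf'
  have hgcont : ContinuousOn g (Icc 0 T) := by
    intro t ht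
    have hin : ContinuousWithinAt (fun s => 1 - γ s / z) (Icc 0 T) t :=
      continuousWithinAt_const.sub ((hγcont t ht).div_const z)
    have hl : ContinuousWithinAt (fun s => Complex.log (1 - γ s / z)) (Icc 0 T) t :=
      ContinuousAt.comp_continuousWithinAt (g := Complex.log)
        (f := fun s => 1 - γ s / z) (continuousAt_clog (hslit t ht)) hin
    exact (Complex.continuous_im.continuousAt.comp_continuousWithinAt hl).div_const _
  have hf'cont : ContinuousOn f' (Icc 0 T) := by
    apply ContinuousOn.div_const
    apply Complex.continuous_im.comp_continuousOn
    exact ContinuousOn.mul hγ'cont (((hγcont.sub continuousOn_const)).inv₀ hne)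
  have hf'int : IntervalIntegrable f' volume 0 T := by
    apply ContinuousOn.intervalIntegrable
    rwa [uIcc_of_le hT.le]
  have hderiv : ∀ t ∈ Ioo (0:ℝ) T, HasDerivWithinAt g (f' t) (Ioi t) t := by
    intro t ht
    have htm : Icc (0:ℝ) T ∈ nhds t := Icc_mem_nhds ht.1 ht.2
    have ht' : t ∈ Icc (0:ℝ) T := Ioo_subset_Icc_self ht
    have hdγ : HasDerivAt γ (γ' t) t :=
      ((hγ.differentiableOn one_ne_zero t ht').hasDerivWithinAt).hasDerivAt htm
    have hinner : HasDerivAt (fun w : ℂ => 1 - w / z) (-z⁻¹) (γ t) := by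
      simpa using ((hasDerivAt_id (γ t)).div_const z).const_sub 1
    have hlog : HasDerivAt Complex.log (1 - γ t / z)⁻¹ (1 - γ t / z) :=
      Complex.hasDerivAt_log (hslit t ht')
    have hF : HasDerivAt (fun w : ℂ => Complex.log (1 - w / z))
        ((1 - γ t / z)⁻¹ * (-z⁻¹)) (γ t) := by have := hlog.comp (γ t) hinner; exact this
    have heq : (1 - γ t / z)⁻¹ * (-z⁻¹) = (γ t - z)⁻¹ := by
      have h2 : γ t - z ≠ 0 := hne t ht'
      have hc : z - γ t ≠ 0 := sub_ne_zero.mpr (Ne.symm (sub_ne_zero.mp h2))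
      have h1 : (1 - γ t / z) = (z - γ t) * z⁻¹ := by field_simp
      rw [h1, mul_inv, inv_inv, ← neg_sub z (γ t), inv_neg]
      field_simp
    rw [heq] at hF
    have hcomp : HasDerivAt (fun s => Complex.log (1 - γ s / z))
        ((γ t - z)⁻¹ * γ' t) t := hF.comp t hdγ
    have him : HasDerivAt (fun s => (Complex.log (1 - γ s / z)).im)
        (((γ t - z)⁻¹ * γ' t).im) t := by
      exact (Complex.imCLM.hasFDerivAt.comp_hasDerivAt t hcomp)
    have := him.div_const (2 * π)
    have heq2 : ((γ t - z)⁻¹ * γ' t).im / (2 * π) = f' t := by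
      rw [hf']; ring_nf
    rw [heq2] at this
    exact this.hasDerivWithinAt
  have key : (∫ t in (0:ℝ)..T, f' t) = g T - g 0 :=
    intervalIntegral.integral_eq_sub_of_hasDeriv_right_of_le hT.le hgcont hderiv hf'int
  have hcongr : EqOn (fun t => dot2 (theta (γ t - z)) (γ' t)) f' (uIcc 0 T) := by
    intro t ht
    rw [uIcc_of_le hT.le] at ht
    simp only [hf']
    rw [dot2_theta _ _ (hne t ht)]
  rw [intervalIntegral.integral_congr hcongr, key, hg]
  simp [hloop]

lemma continuousAt_theta {u : ℂ} (hu : u ≠ 0) : ContinuousAt theta u := by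
  have h1 : ContinuousAt (fun z : ℂ => ((2 * Real.pi * ‖z‖ ^ 2)⁻¹ : ℝ)) u := by
    have hn : 0 < ‖u‖ := norm_pos_iff.2 hu
    apply ContinuousAt.inv₀ (by fun_prop)
    positivity
  exact h1.smul (by fun_prop)

theorem stmt12 (R K T : ℝ) (hR : 0 < R) (hK : 0 < K) (hT : 0 < T) (γ : ℝ → ℂ)
    (hγ : ContDiffOn ℝ 1 γ (Set.Icc 0 T)) (hloop : γ 0 = γ T)
    (hrange : ∀ t ∈ Set.Icc (0:ℝ) T, ‖γ t‖ ≤ R)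
    (φ : ℂ → ℝ) (hφ : ContDiff ℝ (⊤ : ℕ∞) φ) (hpos : ∀ x, 0 ≤ φ x)
    (hsupp : Function.support φ ⊆ Metric.closedBall 0 K) (hint : (∫ x : ℂ, φ x) = 1) :
    -- the mollified winding number vanishes outside the ball of radius `R + K`
    (∀ z : ℂ, R + K < ‖z‖ →
      (∫ t in (0:ℝ)..T,
        dot2 (∫ w : ℂ, φ w • theta (γ t - z - w)) (derivWithin γ (Set.Icc 0 T) t)) = 0) ∧
    -- the (unmollified) winding number vanishes outside the ball of radius `R`
    (∀ z : ℂ, R < ‖z‖ →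
      (∫ t in (0:ℝ)..T,
        dot2 (theta (γ t - z)) (derivWithin γ (Set.Icc 0 T) t)) = 0) := by
  refine ⟨?_, fun z hz => part2 R T hT γ hγ hloop hrange z hz⟩
  intro z hz
  set γ' := fun t => derivWithin γ (Set.Icc 0 T) t with hγ'def
  have hγcont : ContinuousOn γ (Icc 0 T) := hγ.continuousOn
  have hγ'cont : ContinuousOn γ' (Icc 0 T) :=
    hγ.continuousOn_derivWithin (uniqueDiffOn_Icc hT) le_rfl
  -- vanishing of `φ` outside the ball
  have hφ0 : ∀ w : ℂ, K < ‖w‖ → φ w = 0 := by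
    intro w hw
    by_contra h
    have : w ∈ Metric.closedBall (0:ℂ) K := hsupp h
    rw [Metric.mem_closedBall, dist_zero_right] at this
    linarith
  -- nonvanishing of the argument of theta
  have hne : ∀ t ∈ Icc (0:ℝ) T, ∀ w : ℂ, ‖w‖ ≤ K → γ t - z - w ≠ 0 := by
    intro t ht w hw h
    have h1 : z = γ t - w := by
      have := sub_eq_zero.mp h
      linear_combination -this
    have : ‖z‖ ≤ ‖γ t‖ + ‖w‖ := by rw [h1]; exact norm_sub_le _ _
    have := hrange t ht
    linarith
  set F : ℝ → ℂ → ℝ := fun t w => φ w * dot2 (theta (γ t - z - w)) (γ' t) with hF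
  -- Step A: move dot2 inside the inner integral
  have stepA : ∀ t ∈ Icc (0:ℝ) T,
      dot2 (∫ w : ℂ, φ w • theta (γ t - z - w)) (γ' t) = ∫ w : ℂ, F t w := by
    intro t ht
    set v := γ' t with hv
    set L : ℂ →L[ℝ] ℝ := v.re • Complex.reCLM + v.im • Complex.imCLM with hL
    have hLa : ∀ a : ℂ, L a = dot2 a v := by
      intro a
      simp [hL, dot2]
      ring
    have hgcont : Continuous (fun w : ℂ => φ w • theta (γ t - z - w)) := by
      rw [continuous_iff_continuousAt]
      intro w
      by_cases hw : γ t - z - w = 0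
      · have hwK : K < ‖w‖ := by
          have hweq : w = γ t - z := (sub_eq_zero.mp hw).symm
          have h1 : ‖z‖ ≤ ‖γ t‖ + ‖γ t - z‖ := by
            calc ‖z‖ = ‖γ t - (γ t - z)‖ := by ring_nf
            _ ≤ ‖γ t‖ + ‖γ t - z‖ := norm_sub_le _ _
          have := hrange t ht
          rw [hweq]
          linarith
        have hev : (fun x : ℂ => φ x • theta (γ t - z - x)) =ᶠ[nhds w] fun _ => 0 := by
          have hopen : {x : ℂ | K < ‖x‖} ∈ nhds w :=
            (isOpen_lt continuous_const continuous_norm).mem_nhds hwK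
          filter_upwards [hopen] with x hx
          rw [hφ0 x hx, zero_smul]
        exact hev.continuousAt
      · exact (hφ.continuous.continuousAt.smul
          ((continuousAt_theta hw).comp (by fun_prop)))
    have hgcs : HasCompactSupport (fun w : ℂ => φ w • theta (γ t - z - w)) := by
      apply HasCompactSupport.intro (isCompact_closedBall (0:ℂ) K)
      intro x hx
      rw [Metric.mem_closedBall, dist_zero_right, not_le] at hx
      rw [hφ0 x hx, zero_smul]
    have hgint : Integrable (fun w : ℂ => φ w • theta (γ t - z - w)) :=
      hgcont.integrable_of_hasCompactSupport hgcs
    calc dot2 (∫ w : ℂ, φ w • theta (γ t - z - w)) v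
        = L (∫ w : ℂ, φ w • theta (γ t - z - w)) := (hLa _).symm
      _ = ∫ w : ℂ, L (φ w • theta (γ t - z - w)) := (L.integral_comp_comm hgint).symm
      _ = ∫ w : ℂ, F t w := by
          congr 1
          ext w
          rw [L.map_smul, smul_eq_mul, hLa, hF]
  have stepB : (∫ t in (0:ℝ)..T,
      dot2 (∫ w : ℂ, φ w • theta (γ t - z - w)) (γ' t)) =
      ∫ t in Ioc (0:ℝ) T, (∫ w : ℂ, F t w) := by
    rw [← intervalIntegral.integral_of_le hT.le]
    exact intervalIntegral.integral_congr fun t ht =>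
      stepA t (by rwa [uIcc_of_le hT.le] at ht)
  rw [stepB]
  -- Fubini
  have hS : ContinuousOn (Function.uncurry F)
      ((Icc (0:ℝ) T) ×ˢ (Metric.closedBall (0:ℂ) K)) := by
    set S := (Icc (0:ℝ) T) ×ˢ (Metric.closedBall (0:ℂ) K) with hSdef
    have c1 : ContinuousOn (fun p : ℝ × ℂ => γ p.1) S :=
      hγcont.comp continuous_fst.continuousOn (fun p hp => hp.1)
    have c2 : ContinuousOn (fun p : ℝ × ℂ => γ' p.1) S :=
      hγ'cont.comp continuous_fst.continuousOn (fun p hp => hp.1)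
    have cθ : ContinuousOn (fun p : ℝ × ℂ => theta (γ p.1 - z - p.2)) S := by
      intro p hp
      have harg : ContinuousWithinAt (fun q : ℝ × ℂ => γ q.1 - z - q.2) S p :=
        ((c1 p hp).sub continuousWithinAt_const).sub continuous_snd.continuousWithinAt
      have hp2 : ‖p.2‖ ≤ K := by
        have := hp.2
        rwa [Metric.mem_closedBall, dist_zero_right] at this
      exact ContinuousAt.comp_continuousWithinAt (x := p) (g := theta)
        (f := fun q : ℝ × ℂ => γ q.1 - z - q.2)
        (continuousAt_theta (hne p.1 hp.1 p.2 hp2)) harg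
    show ContinuousOn (fun p : ℝ × ℂ => φ p.2 * dot2 (theta (γ p.1 - z - p.2)) (γ' p.1)) S
    simp only [dot2]
    apply ContinuousOn.mul ((hφ.continuous.comp continuous_snd).continuousOn)
    exact ((Complex.continuous_re.comp_continuousOn cθ).mul
        (Complex.continuous_re.comp_continuousOn c2)).add
      ((Complex.continuous_im.comp_continuousOn cθ).mul
        (Complex.continuous_im.comp_continuousOn c2))
  have hIntProd : Integrable (Function.uncurry F)
      ((volume.restrict (Ioc (0:ℝ) T)).prod volume) := by
    rw [Measure.restrict_prod_eq_prod_univ, ← Measure.volume_eq_prod]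
    have h1 : IntegrableOn (Function.uncurry F)
        ((Icc (0:ℝ) T) ×ˢ Metric.closedBall (0:ℂ) K) volume :=
      hS.integrableOn_compact (isCompact_Icc.prod (isCompact_closedBall _ _))
    apply h1.of_forall_diff_eq_zero (measurableSet_Ioc.prod MeasurableSet.univ)
    intro p hp
    have hp1 : p.1 ∈ Icc (0:ℝ) T := Ioc_subset_Icc_self hp.1.1
    have hp2 : p.2 ∉ Metric.closedBall (0:ℂ) K := by
      intro h
      exact hp.2 ⟨hp1, h⟩
    rw [Metric.mem_closedBall, dist_zero_right, not_le] at hp2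
    show F p.1 p.2 = 0
    rw [hF]
    simp only [hφ0 p.2 hp2, zero_mul]
  rw [MeasureTheory.integral_integral_swap hIntProd]
  have hinner : ∀ w : ℂ, (∫ t in Ioc (0:ℝ) T, F t w) = 0 := by
    intro w
    by_cases hw : φ w = 0
    · simp only [hF, hw, zero_mul, integral_zero]
    · have hwK : ‖w‖ ≤ K := by
        have := hsupp hw
        rwa [Metric.mem_closedBall, dist_zero_right] at this
      have hz' : R < ‖z + w‖ := by
        have h1 : ‖z‖ ≤ ‖z + w‖ + ‖w‖ := by
          calc ‖z‖ = ‖z + w - w‖ := by ring_nf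
          _ ≤ ‖z + w‖ + ‖w‖ := norm_sub_le _ _
        linarith
      have h0 := part2 R T hT γ hγ hloop hrange (z + w) hz'
      rw [intervalIntegral.integral_of_le hT.le] at h0
      calc (∫ t in Ioc (0:ℝ) T, F t w)
          = ∫ t in Ioc (0:ℝ) T, φ w * dot2 (theta (γ t - (z + w))) (γ' t) := by
            rw [hF]; simp only [sub_sub]
        _ = φ w * ∫ t in Ioc (0:ℝ) T, dot2 (theta (γ t - (z + w))) (γ' t) :=
            integral_const_mul _ _
        _ = 0 := by rw [h0, mul_zero]
  simp only [hinner, integral_zero]
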